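/- (Corollary to Cartan's classification: decomposition of an orthogonal connection's torsion endomorphism.) Let V be a finite-dimensional real inner product space with dim V > 3, and let A : V×V → V be a skew-adjoint torsion endomorphism, i.e. a bilinear map with ⟨A(X,Y),Z⟩ = −⟨Y, A(X,Z)⟩ for all X,Y,Z ∈ V. Then there exist a unique vector v ∈ V, a unique totally antisymmetric trilinear form T ∈ 𝒯₂(V) and a unique Cartan-type trilinear form S ∈ 𝒯₃(V) such that ⟨A(X,Y),Z⟩ = ⟨X,Y⟩⟨v,Z⟩ − ⟨v,Y⟩⟨X,Z⟩ + T(X,Y,Z) + S(X,Y,Z) for all X,Y,Z ∈ V. -/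

import Mathlib

open scoped RealInnerProductSpace BigOperators

variable {V : Type*} [NormedAddCommGroup V] [InnerProductSpace ℝ V] [FiniteDimensional ℝ V]

/-- The space `𝒯(V)` of algebraic torsion tensors: trilinear forms that are
antisymmetric in the last two arguments. -/
def IsTorsionTensor (A : V →ₗ[ℝ] V →ₗ[ℝ] V →ₗ[ℝ] ℝ) : Prop :=
  ∀ X Y Z : V, A X Y Z = - A X Z Y

/-- `𝒯₂(V)`: totally antisymmetric torsion tensors. -/
def IsTotallyAntisymmetricTorsion (A : V →ₗ[ℝ] V →ₗ[ℝ] V →ₗ[ℝ] ℝ) : Prop :=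
  IsTorsionTensor A ∧ ∀ X Y Z : V, A X Y Z = - A Y X Z

/-- The contraction `c₁₂(A)(Z) = ∑ᵢ A(eᵢ, eᵢ, Z)` over an orthonormal basis. -/
noncomputable def c12 (A : V →ₗ[ℝ] V →ₗ[ℝ] V →ₗ[ℝ] ℝ) (Z : V) : ℝ :=
  ∑ i, A (stdOrthonormalBasis ℝ V i) (stdOrthonormalBasis ℝ V i) Z

/-- `𝒯₃(V)`: torsion tensors of Cartan type. -/
def IsCartanTorsion (A : V →ₗ[ℝ] V →ₗ[ℝ] V →ₗ[ℝ] ℝ) : Prop :=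
  IsTorsionTensor A ∧ (∀ X Y Z : V, A X Y Z + A Y Z X + A Z X Y = 0) ∧
    ∀ Z : V, c12 A Z = 0


/-!
The three summands are recovered from `B X Y Z = ⟪A X Y, Z⟫` by two linear operations.
The contraction `c₁₂` kills `𝒯₂` and `𝒯₃` and sends the vectorial tensor of `v` to
`(dim V - 1) ⟪v, ·⟫`, while the cyclic sum over `X, Y, Z` kills the vectorial tensor and `𝒯₃`
and triples `𝒯₂`. This determines `v` and `T`, hence `S`; conversely, defining `v` and `T` by
these formulas and `S` as the remainder gives a decomposition.
-/

section

variable {E : Type*} [NormedAddCommGroup E] [InnerProductSpace ℝ E]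

lemma IsTotallyAntisymmetricTorsion.apply_self {T : E →ₗ[ℝ] E →ₗ[ℝ] E →ₗ[ℝ] ℝ}
    (hT : IsTotallyAntisymmetricTorsion T) (X Z : E) : T X X Z = 0 := by
  linarith [hT.2 X X Z]

lemma IsTotallyAntisymmetricTorsion.apply_rotate {T : E →ₗ[ℝ] E →ₗ[ℝ] E →ₗ[ℝ] ℝ}
    (hT : IsTotallyAntisymmetricTorsion T) (X Y Z : E) : T Y Z X = T X Y Z := by
  linarith [hT.2 Y Z X, hT.1 Z Y X, hT.2 Z X Y, hT.1 X Z Y]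

noncomputable def vectorialTorsion (v : E) : E →ₗ[ℝ] E →ₗ[ℝ] E →ₗ[ℝ] ℝ :=
  LinearMap.mk₂ ℝ (fun X Y => ⟪X, Y⟫ • innerₗ E v - ⟪v, Y⟫ • innerₗ E X)
    (fun _ _ _ => by ext; simp [inner_add_left]; ring)
    (fun _ _ _ => by ext; simp [real_inner_smul_left]; ring)
    (fun _ _ _ => by ext; simp [inner_add_right]; ring)
    (fun _ _ _ => by ext; simp [real_inner_smul_right]; ring)

@[simp]
lemma vectorialTorsion_apply (v X Y Z : E) :
    vectorialTorsion v X Y Z = ⟪X, Y⟫ * ⟪v, Z⟫ - ⟪v, Y⟫ * ⟪X, Z⟫ := by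
  simp [vectorialTorsion]

lemma isTorsionTensor_vectorialTorsion (v : E) : IsTorsionTensor (vectorialTorsion v) := by
  intro X Y Z
  simp only [vectorialTorsion_apply]
  ring

lemma vectorialTorsion_cyclic_sum (v X Y Z : E) :
    vectorialTorsion v X Y Z + vectorialTorsion v Y Z X + vectorialTorsion v Z X Y = 0 := by
  simp only [vectorialTorsion_apply, real_inner_comm X Y, real_inner_comm Y Z, real_inner_comm Z X]
  ring

noncomputable def rotate (B : E →ₗ[ℝ] E →ₗ[ℝ] E →ₗ[ℝ] ℝ) : E →ₗ[ℝ] E →ₗ[ℝ] E →ₗ[ℝ] ℝ :=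
  (LinearMap.lflip.toLinearMap ∘ₗ B).flip

@[simp]
lemma rotate_apply (B : E →ₗ[ℝ] E →ₗ[ℝ] E →ₗ[ℝ] ℝ) (X Y Z : E) : rotate B X Y Z = B Y Z X :=
  rfl

noncomputable def cyclicPart (B : E →ₗ[ℝ] E →ₗ[ℝ] E →ₗ[ℝ] ℝ) : E →ₗ[ℝ] E →ₗ[ℝ] E →ₗ[ℝ] ℝ :=
  (3 : ℝ)⁻¹ • (B + rotate B + rotate (rotate B))

@[simp]
lemma cyclicPart_apply (B : E →ₗ[ℝ] E →ₗ[ℝ] E →ₗ[ℝ] ℝ) (X Y Z : E) :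
    cyclicPart B X Y Z = (B X Y Z + B Y Z X + B Z X Y) / 3 := by
  simp only [cyclicPart, LinearMap.smul_apply, LinearMap.add_apply, rotate_apply, smul_eq_mul]
  ring

lemma IsTorsionTensor.isTotallyAntisymmetricTorsion_cyclicPart
    {B : E →ₗ[ℝ] E →ₗ[ℝ] E →ₗ[ℝ] ℝ} (hB : IsTorsionTensor B) :
    IsTotallyAntisymmetricTorsion (cyclicPart B) := by
  refine ⟨fun X Y Z => ?_, fun X Y Z => ?_⟩ <;>
  · simp only [cyclicPart_apply]
    linarith [hB X Y Z, hB Y Z X, hB Z X Y]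

lemma cyclicPart_eq_of_decomposition {B T S : E →ₗ[ℝ] E →ₗ[ℝ] E →ₗ[ℝ] ℝ} {v : E}
    (hT : IsTotallyAntisymmetricTorsion T)
    (hS : ∀ X Y Z : E, S X Y Z + S Y Z X + S Z X Y = 0)
    (h : ∀ X Y Z : E, B X Y Z = vectorialTorsion v X Y Z + T X Y Z + S X Y Z) :
    cyclicPart B = T := by
  ext X Y Z
  simp only [cyclicPart_apply, h]
  linarith [vectorialTorsion_cyclic_sum v X Y Z, hS X Y Z, hT.apply_rotate X Y Z,
    hT.apply_rotate Y Z X]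

end

lemma IsTotallyAntisymmetricTorsion.c12_eq_zero {T : V →ₗ[ℝ] V →ₗ[ℝ] V →ₗ[ℝ] ℝ}
    (hT : IsTotallyAntisymmetricTorsion T) (Z : V) : c12 T Z = 0 := by
  simp [c12, hT.apply_self]

lemma c12_vectorialTorsion (v Z : V) :
    c12 (vectorialTorsion v) Z = (Module.finrank ℝ V - 1) * ⟪v, Z⟫ := by
  have hnorm (i) : ⟪stdOrthonormalBasis ℝ V i, stdOrthonormalBasis ℝ V i⟫ = 1 := by
    simp [(stdOrthonormalBasis ℝ V).orthonormal.1 i]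
  simp only [c12, vectorialTorsion_apply, Finset.sum_sub_distrib, ← Finset.sum_mul, hnorm,
    (stdOrthonormalBasis ℝ V).sum_inner_mul_inner, Finset.sum_const, Finset.card_univ,
    Fintype.card_fin, nsmul_eq_mul, mul_one]
  ring

lemma c12_eq_of_decomposition {B T S : V →ₗ[ℝ] V →ₗ[ℝ] V →ₗ[ℝ] ℝ} {v : V}
    (hT : IsTotallyAntisymmetricTorsion T) (hS : ∀ Z : V, c12 S Z = 0)
    (h : ∀ X Y Z : V, B X Y Z = vectorialTorsion v X Y Z + T X Y Z + S X Y Z) (Z : V) :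
    c12 B Z = (Module.finrank ℝ V - 1) * ⟪v, Z⟫ := by
  calc c12 B Z = c12 (vectorialTorsion v) Z + c12 T Z + c12 S Z := by
        simp only [c12, h, Finset.sum_add_distrib]
    _ = (Module.finrank ℝ V - 1) * ⟪v, Z⟫ := by
        rw [c12_vectorialTorsion, hT.c12_eq_zero, hS, add_zero, add_zero]

noncomputable def vectorialPart (B : V →ₗ[ℝ] V →ₗ[ℝ] V →ₗ[ℝ] ℝ) : V :=
  ((Module.finrank ℝ V : ℝ) - 1)⁻¹ • (InnerProductSpace.toDual ℝ V).symm
    (∑ i, B (stdOrthonormalBasis ℝ V i) (stdOrthonormalBasis ℝ V i)).toContinuousLinearMap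

lemma mul_inner_vectorialPart (hn : Module.finrank ℝ V ≠ 1)
    (B : V →ₗ[ℝ] V →ₗ[ℝ] V →ₗ[ℝ] ℝ) (Z : V) :
    (Module.finrank ℝ V - 1) * ⟪vectorialPart B, Z⟫ = c12 B Z := by
  have hn' : (Module.finrank ℝ V : ℝ) - 1 ≠ 0 := sub_ne_zero.2 (by exact_mod_cast hn)
  simp [vectorialPart, real_inner_smul_left, sum_inner, c12, hn']

-- `-1 •` rather than `-`: instance search does not find subtraction on trilinear forms.
noncomputable def cartanPart (B : V →ₗ[ℝ] V →ₗ[ℝ] V →ₗ[ℝ] ℝ) : V →ₗ[ℝ] V →ₗ[ℝ] V →ₗ[ℝ] ℝ :=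
  B + (-1 : ℝ) • (vectorialTorsion (vectorialPart B) + cyclicPart B)

lemma cartanPart_apply (B : V →ₗ[ℝ] V →ₗ[ℝ] V →ₗ[ℝ] ℝ) (X Y Z : V) :
    cartanPart B X Y Z =
      B X Y Z - vectorialTorsion (vectorialPart B) X Y Z - cyclicPart B X Y Z := by
  simp only [cartanPart, LinearMap.add_apply, LinearMap.smul_apply, smul_eq_mul]
  ring

lemma IsTorsionTensor.isCartanTorsion_cartanPart (hn : Module.finrank ℝ V ≠ 1)
    {B : V →ₗ[ℝ] V →ₗ[ℝ] V →ₗ[ℝ] ℝ} (hB : IsTorsionTensor B) :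
    IsCartanTorsion (cartanPart B) := by
  have hT := hB.isTotallyAntisymmetricTorsion_cyclicPart
  refine ⟨fun X Y Z => ?_, fun X Y Z => ?_, fun Z => ?_⟩
  · simp only [cartanPart_apply]
    linarith [hB X Y Z, isTorsionTensor_vectorialTorsion (vectorialPart B) X Y Z, hT.1 X Y Z]
  · simp only [cartanPart_apply, cyclicPart_apply]
    linarith [vectorialTorsion_cyclic_sum (vectorialPart B) X Y Z]
  · calc c12 (cartanPart B) Z
          = c12 B Z - c12 (vectorialTorsion (vectorialPart B)) Z - c12 (cyclicPart B) Z := by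
          simp only [c12, cartanPart_apply, Finset.sum_sub_distrib]
      _ = 0 := by
          rw [c12_vectorialTorsion, mul_inner_vectorialPart hn, hT.c12_eq_zero, sub_self, sub_zero]

theorem existsUnique_torsion_decomposition (hn : Module.finrank ℝ V ≠ 1)
    {B : V →ₗ[ℝ] V →ₗ[ℝ] V →ₗ[ℝ] ℝ} (hB : IsTorsionTensor B) :
    ∃! p : V × (V →ₗ[ℝ] V →ₗ[ℝ] V →ₗ[ℝ] ℝ) × (V →ₗ[ℝ] V →ₗ[ℝ] V →ₗ[ℝ] ℝ),
      IsTotallyAntisymmetricTorsion p.2.1 ∧ IsCartanTorsion p.2.2 ∧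
        ∀ X Y Z : V, B X Y Z =
          ⟪X, Y⟫ * ⟪p.1, Z⟫ - ⟪p.1, Y⟫ * ⟪X, Z⟫ + p.2.1 X Y Z + p.2.2 X Y Z := by
  refine ⟨(vectorialPart B, cyclicPart B, cartanPart B),
    ⟨hB.isTotallyAntisymmetricTorsion_cyclicPart, hB.isCartanTorsion_cartanPart hn,
      fun X Y Z => ?_⟩, ?_⟩
  · simp only [cartanPart_apply, vectorialTorsion_apply]
    ring
  rintro ⟨v, T, S⟩ ⟨hT, hS, h⟩
  simp only [← vectorialTorsion_apply] at h
  have hn' : (Module.finrank ℝ V : ℝ) - 1 ≠ 0 := sub_ne_zero.2 (by exact_mod_cast hn)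
  obtain rfl : v = vectorialPart B := ext_inner_right ℝ fun Z => mul_left_cancel₀ hn' <| by
    rw [mul_inner_vectorialPart hn, c12_eq_of_decomposition hT hS.2.2 h]
  obtain rfl : T = cyclicPart B := (cyclicPart_eq_of_decomposition hT hS.2.1 h).symm
  obtain rfl : S = cartanPart B := by
    ext X Y Z
    rw [cartanPart_apply, h]
    ring
  rfl

/-- Corollary to Cartan's classification: for `dim V > 3`, the torsion endomorphism of
an orthogonal connection decomposes uniquely into a vectorial part (given by a vector
`v`), a totally antisymmetric part `T ∈ 𝒯₂(V)` and a Cartan-type part `S ∈ 𝒯₃(V)`. -/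
theorem torsion_endomorphism_decomposition
    (hdim : 3 < Module.finrank ℝ V)
    (A : V →ₗ[ℝ] V →ₗ[ℝ] V)
    (hA : ∀ X Y Z : V, ⟪A X Y, Z⟫ = - ⟪Y, A X Z⟫) :
    ∃! p : V × (V →ₗ[ℝ] V →ₗ[ℝ] V →ₗ[ℝ] ℝ) × (V →ₗ[ℝ] V →ₗ[ℝ] V →ₗ[ℝ] ℝ),
      IsTotallyAntisymmetricTorsion p.2.1 ∧ IsCartanTorsion p.2.2 ∧
        ∀ X Y Z : V, ⟪A X Y, Z⟫ =
          ⟪X, Y⟫ * ⟪p.1, Z⟫ - ⟪p.1, Y⟫ * ⟪X, Z⟫ + p.2.1 X Y Z + p.2.2 X Y Z := by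
  have hB : IsTorsionTensor (A.compr₂ (innerₗ V)) := fun X Y Z => by
    simpa [real_inner_comm] using hA X Y Z
  exact existsUnique_torsion_decomposition (by omega) hB
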